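/- arXiv:1409.3515 — 2 statements merged into one kernel-verified Lean document; each statement's English description precedes it below -/
import Mathlib

section
/- For the QIF model with S > 0, α = arctan(x̲/√S), β = arctan(x̄/√S), the iPRC is Z(φ) = (1/(ST)) · cos²(φβ + (1-φ)α), and Z'(φ) + Z'(1-φ) = -(2/√S)·sin(α+β)·cos((2φ-1)(β-α)). -/
open Set Real

/-!
With `θ φ = φβ + (1-φ)α`, the identity `S + S tan² θ = S / cos² θ` gives `Z = cos² θ / (S T)`
wherever `cos θ ≠ 0`, in particular on a neighbourhood of `[0, 1]` since `θ` maps `[0, 1]` onto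
`[α, β] ⊆ (-π/2, π/2)`. Differentiating, `Z' φ = -sin (2 θ φ) / √S` because `S T = √S (β - α)`,
and the sum-to-product formula for `sin (2 θ φ) + sin (2 θ (1-φ))` finishes the proof.
-/

lemma one_div_mul_add_sq_sqrt_mul_tan {S T θ : ℝ} (hS : 0 ≤ S) (hcos : cos θ ≠ 0) :
    1 / (T * (S + (√S * tan θ) ^ 2)) = 1 / (S * T) * cos θ ^ 2 := by
  rw [mul_pow, sq_sqrt hS, ← inv_one_add_tan_sq hcos]
  field_simp

lemma hasDerivAt_cos_sq_lerp (a b x : ℝ) :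
    HasDerivAt (fun φ => cos (φ * b + (1 - φ) * a) ^ 2)
      (-(b - a) * sin (2 * (x * b + (1 - x) * a))) x := by
  have hlerp : HasDerivAt (fun φ => φ * b + (1 - φ) * a) (b - a) x := by
    have := ((hasDerivAt_id' x).mul_const b).fun_add (((hasDerivAt_id' x).const_sub 1).mul_const a)
    exact this.congr_deriv (by ring)
  exact (hlerp.cos.fun_pow 2).congr_deriv (by rw [sin_two_mul]; push_cast; ring)

lemma sin_two_mul_lerp_add_sin_two_mul_lerp_one_sub (a b φ : ℝ) :
    sin (2 * (φ * b + (1 - φ) * a)) + sin (2 * ((1 - φ) * b + (1 - (1 - φ)) * a)) =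
      2 * sin (a + b) * cos ((2 * φ - 1) * (b - a)) := by
  have h₁ : 2 * (φ * b + (1 - φ) * a) = (a + b) + (2 * φ - 1) * (b - a) := by ring
  have h₂ : 2 * ((1 - φ) * b + (1 - (1 - φ)) * a) = (a + b) - (2 * φ - 1) * (b - a) := by ring
  rw [h₁, h₂, sin_add, sin_sub]
  ring

/-- For the QIF model with `S > 0`, `α = arctan (x̲/√S)`, `β = arctan (x̄/√S)`, the iPRC is
`Z φ = (1/(S T)) cos² (φβ + (1-φ)α)` and
`Z' φ + Z' (1-φ) = -(2/√S) sin (α+β) cos ((2φ-1)(β-α))`. -/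
theorem qif_iPRC (S xl xu : ℝ) (hS : 0 < S) (hx : xl < xu)
    (α β : ℝ) (hα : α = Real.arctan (xl / Real.sqrt S)) (hβ : β = Real.arctan (xu / Real.sqrt S))
    (T : ℝ) (hT : T = (β - α) / Real.sqrt S)
    (f Z : ℝ → ℝ)
    (hf : ∀ φ, f φ = Real.sqrt S * Real.tan (φ * β + (1 - φ) * α))
    (hZ : ∀ φ, Z φ = 1 / (T * (S + f φ ^ 2))) :
    ∀ φ ∈ Icc (0:ℝ) 1,
      Z φ = (1 / (S * T)) * Real.cos (φ * β + (1 - φ) * α) ^ 2 ∧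
      deriv Z φ + deriv Z (1 - φ) =
        -(2 / Real.sqrt S) * Real.sin (α + β) * Real.cos ((2 * φ - 1) * (β - α)) := by
  have hsqrt : 0 < √S := sqrt_pos.2 hS
  have hαβ : α < β := hα ▸ hβ ▸ arctan_strictMono (by gcongr)
  have hST : S * T = √S * (β - α) := by
    rw [hT, ← mul_div_assoc, div_eq_iff hsqrt.ne', mul_assoc, mul_comm (β - α), ← mul_assoc,
      mul_self_sqrt hS.le]
  set U := {φ : ℝ | φ * β + (1 - φ) * α ∈ Ioo (-(π / 2)) (π / 2)}
  have hU : IsOpen U := isOpen_Ioo.preimage (by fun_prop)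
  have hIccU : Icc 0 1 ⊆ U := fun φ ⟨h₀, h₁⟩ =>
    ⟨by nlinarith [hα ▸ neg_pi_div_two_lt_arctan (xl / √S)],
      by nlinarith [hβ ▸ arctan_lt_pi_div_two (xu / √S)]⟩
  have hZU : ∀ φ ∈ U, Z φ = 1 / (S * T) * cos (φ * β + (1 - φ) * α) ^ 2 := fun φ hφ => by
    rw [hZ, hf, one_div_mul_add_sq_sqrt_mul_tan hS.le (cos_pos_of_mem_Ioo hφ).ne']
  have hZ' : ∀ φ ∈ U, deriv Z φ = -(1 / √S) * sin (2 * (φ * β + (1 - φ) * α)) := by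
    intro φ hφ
    rw [(Filter.eventuallyEq_of_mem (hU.mem_nhds hφ) hZU).deriv_eq,
      ((hasDerivAt_cos_sq_lerp α β φ).const_mul _).deriv, hST]
    field_simp [(sub_pos.2 hαβ).ne']
  intro φ hφ
  refine ⟨hZU φ (hIccU hφ), ?_⟩
  rw [hZ' φ (hIccU hφ), hZ' (1 - φ) (hIccU ⟨by linarith [hφ.2], by linarith [hφ.1]⟩)]
  linear_combination (-(1 / √S)) * sin_two_mul_lerp_add_sin_two_mul_lerp_one_sub α β φ
end

section
/- The (k+1)-fold composition of the shift map σ_k with itself is the identity map on ℝᵏ. -/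
/-- The affine shift map `σ_k : (θ₁,…,θ_k) ↦ (1-θ_k, θ₁+1-θ_k, …, θ_{k-1}+1-θ_k)`. -/
def shiftMap (k : ℕ) (hk : 0 < k) (θ : Fin k → ℝ) : Fin k → ℝ :=
  fun i =>
    if i.1 = 0 then 1 - θ ⟨k - 1, Nat.sub_lt hk one_pos⟩
    else θ ⟨i.1 - 1, Nat.lt_of_le_of_lt (Nat.sub_le i.1 1) i.isLt⟩ + 1 -
      θ ⟨k - 1, Nat.sub_lt hk one_pos⟩

private lemma theta_congr {k : ℕ} (θ : Fin k → ℝ) {a b : ℕ} (h : a < k) (h' : b < k)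
    (e : a = b) : θ ⟨a, h⟩ = θ ⟨b, h'⟩ := by subst e; rfl

private lemma shiftMap_apply (k : ℕ) (hk : 0 < k) (θ : Fin k → ℝ) (i : Fin k) :
    shiftMap k hk θ i =
      if i.1 = 0 then 1 - θ ⟨k - 1, Nat.sub_lt hk one_pos⟩
      else θ ⟨i.1 - 1, Nat.lt_of_le_of_lt (Nat.sub_le i.1 1) i.isLt⟩ + 1 -
        θ ⟨k - 1, Nat.sub_lt hk one_pos⟩ := rfl

private lemma shiftMap_iterate_formula (k : ℕ) (hk : 0 < k) (m : ℕ) (hm : 1 ≤ m)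
    (hmk : m ≤ k) (θ : Fin k → ℝ) (i : Fin k) :
    (shiftMap k hk)^[m] θ i =
      if h1 : i.1 + 1 < m then
        θ ⟨k - m + 1 + i.1, by omega⟩ - θ ⟨k - m, by omega⟩
      else if h2 : i.1 + 1 = m then 1 - θ ⟨k - m, by omega⟩
      else θ ⟨i.1 - m, by omega⟩ + 1 - θ ⟨k - m, by omega⟩ := by
  induction m, hm using Nat.le_induction generalizing i with
  | base =>
    have hi := i.isLt
    rw [Function.iterate_one, shiftMap_apply]
    rcases Nat.eq_zero_or_pos i.1 with h | h
    · rw [if_pos h, dif_neg (by omega), dif_pos (by omega)]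
    · rw [if_neg (by omega), dif_neg (by omega), dif_neg (by omega),
        theta_congr θ (Nat.lt_of_le_of_lt (Nat.sub_le i.1 1) i.isLt) (by omega) (by omega : i.1 - 1 = i.1 - 1),
        theta_congr θ (Nat.sub_lt hk one_pos) (by omega) (by omega : k - 1 = k - 1)]
  | succ m hm1 ih =>
    have hmk' : m ≤ k := by omega
    have hi := i.isLt
    rw [Function.iterate_succ_apply', shiftMap_apply]
    have hlast : (shiftMap k hk)^[m] θ ⟨k - 1, Nat.sub_lt hk one_pos⟩ =
        θ ⟨k - 1 - m, by omega⟩ + 1 - θ ⟨k - m, by omega⟩ := by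
      rw [ih hmk' ⟨k - 1, Nat.sub_lt hk one_pos⟩, dif_neg (by simp; omega), dif_neg (by simp; omega)]
    rcases Nat.eq_zero_or_pos i.1 with h | h
    · rw [if_pos h, hlast]
      rcases Nat.lt_or_ge (i.1 + 1) (m + 1) with h2 | h2
      · rw [dif_pos h2,
          theta_congr θ (by omega) (by omega : k - (m+1) < k) (by omega : k - 1 - m = k - (m+1)),
          theta_congr θ (by omega) (by omega : k - (m+1) + 1 + i.1 < k) (by omega : k - m = k - (m+1) + 1 + i.1)]
        ring
      · omega
    · rw [if_neg (by omega), hlast,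
        ih hmk' ⟨i.1 - 1, Nat.lt_of_le_of_lt (Nat.sub_le i.1 1) i.isLt⟩]
      rcases Nat.lt_or_ge (i.1 - 1 + 1) m with h2 | h2
      · rw [dif_pos (by simpa using h2), dif_pos (by omega),
          theta_congr θ (by omega) (by omega : k - (m+1) + 1 + i.1 < k) (by omega : k - m + 1 + (i.1 - 1) = k - (m+1) + 1 + i.1),
          theta_congr θ (by omega) (by omega : k - (m+1) < k) (by omega : k - 1 - m = k - (m+1)),
          theta_congr θ (by omega) (by omega : k - (m+1) + 1 < k) (by omega : k - m = k - (m+1) + 1)]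
        ring
      · rcases Nat.eq_or_lt_of_le h2 with h3 | h3
        · rw [dif_neg (by simp; omega), dif_pos (by simpa using h3.symm), dif_neg (by omega),
            dif_pos (by omega : i.1 + 1 = m + 1),
            theta_congr θ (by omega) (by omega : k - (m+1) < k) (by omega : k - 1 - m = k - (m+1)),
            theta_congr θ (by omega) (by omega : k - (m+1) + 1 < k) (by omega : k - m = k - (m+1) + 1)]
          ring
        · rw [dif_neg (by simp; omega), dif_neg (by simp; omega), dif_neg (by omega),
            dif_neg (by omega),
            theta_congr θ (by omega) (by omega : i.1 - (m+1) < k) (by omega : i.1 - 1 - m = i.1 - (m+1)),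
            theta_congr θ (by omega) (by omega : k - (m+1) < k) (by omega : k - 1 - m = k - (m+1)),
            theta_congr θ (by omega) (by omega : k - (m+1) + 1 < k) (by omega : k - m = k - (m+1) + 1)]
          ring

/-- The `(k+1)`-fold composition of the shift map `σ_k` with itself is the identity on `ℝᵏ`. -/
theorem shiftMap_iterate_id (k : ℕ) (hk : 0 < k) :
    (shiftMap k hk)^[k + 1] = id := by
  funext θ i
  simp only [id_eq]
  have hi := i.isLt
  rw [Function.iterate_succ_apply', shiftMap_apply]
  have hlast : (shiftMap k hk)^[k] θ ⟨k - 1, Nat.sub_lt hk one_pos⟩ = 1 - θ ⟨0, hk⟩ := by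
    rw [shiftMap_iterate_formula k hk k hk le_rfl, dif_neg (by simp; omega), dif_pos (by simp; omega)]
    exact congrArg (1 - ·) (theta_congr θ _ _ (by omega))
  rcases Nat.eq_zero_or_pos i.1 with h | h
  · rw [if_pos h, hlast, theta_congr θ hk i.isLt (by omega)]
    show 1 - (1 - θ ⟨i.1, i.isLt⟩) = _
    rw [Fin.eta]
    ring
  · rw [if_neg (by omega), hlast,
      shiftMap_iterate_formula k hk k hk le_rfl θ ⟨i.1 - 1, Nat.lt_of_le_of_lt (Nat.sub_le i.1 1) i.isLt⟩,
      dif_pos (by simp; omega),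
      theta_congr θ (by omega) i.isLt (by omega : k - k + 1 + (i.1 - 1) = i.1),
      theta_congr θ (by omega) hk (by omega : k - k = 0)]
    rw [Fin.eta]
    ring
end
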